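/- arXiv:2209.11571 — 4 statements merged into one kernel-verified Lean document; each statement's English description precedes it below -/
import Mathlib

section
/- Let $H_1 \in \mathbb{R}^{n_1\times n_1}$ and $H_2 \in \mathbb{R}^{n_2\times n_2}$ be symmetric with eigenvalues in $[\lambda_{min}, \lambda_{max}]$, $0 < \lambda_{min} \le \lambda_{max}$, and let $M_1, M_2$ be matrices of appropriate sizes with operator norm at most $C_H > 0$. If $0 < t \le \frac{\lambda_{min}^2}{8 \lambda_{max} C_H}$, then the block matrix $\mathcal{H}_t = \begin{pmatrix} H_1 & t M_1 \\ t M_2 & H_2 \end{pmatrix}$ satisfies $\|\mathcal{H}_t z\|^2 \ge \frac{\lambda_{min}^2}{2}\|z\|^2$ for all $z$; in particular $\mathcal{H}_t$ is invertible and $\|\mathcal{H}_t^{-1}\| \le \frac{\sqrt{2}}{\lambda_{min}}$. -/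
open scoped RealInnerProductSpace
set_option maxHeartbeats 1000000

section aux
variable {E : Type*} [NormedAddCommGroup E] [InnerProductSpace ℝ E]

private lemma quad_upper' (A : E →L[ℝ] E) (hsym : ∀ x y, ⟪A x, y⟫ = ⟪x, A y⟫)
    (lmax : ℝ) (hl : 0 ≤ lmax)
    (hpos : ∀ x, 0 ≤ ⟪A x, x⟫) (hub : ∀ x, ⟪A x, x⟫ ≤ lmax * ‖x‖ ^ 2)
    (x y : E) : ⟪A x, y⟫ ≤ lmax * (‖x‖ * ‖y‖) := by
  have key : ∀ u v : E, 4 * ⟪A u, v⟫ ≤ lmax * ‖u + v‖ ^ 2 := by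
    intro u v
    have hc : ⟪A v, u⟫ = ⟪A u, v⟫ := by rw [hsym v u, real_inner_comm]
    have e1 : ⟪A (u + v), u + v⟫ = ⟪A u, u⟫ + 2 * ⟪A u, v⟫ + ⟪A v, v⟫ := by
      simp only [map_add, inner_add_left, inner_add_right]
      rw [hc]; ring
    have e2 : ⟪A (u - v), u - v⟫ = ⟪A u, u⟫ - 2 * ⟪A u, v⟫ + ⟪A v, v⟫ := by
      simp only [map_sub, inner_sub_left, inner_sub_right]
      rw [hc]; ring
    have h1 := hub (u + v)
    have h2 := hpos (u - v)
    linarith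
  rcases eq_or_ne x 0 with rfl | hx
  · simp [hl, mul_nonneg, norm_nonneg] at *
  rcases eq_or_ne y 0 with rfl | hy
  · simp
  have hx' : 0 < ‖x‖ := norm_pos_iff.mpr hx
  have hy' : 0 < ‖y‖ := norm_pos_iff.mpr hy
  have hk := key (‖y‖ • x) (‖x‖ • y)
  have e3 : ⟪A (‖y‖ • x), ‖x‖ • y⟫ = ‖x‖ * ‖y‖ * ⟪A x, y⟫ := by
    simp [map_smul, real_inner_smul_left, real_inner_smul_right]; ring
  have e4 : ‖‖y‖ • x + ‖x‖ • y‖ ^ 2 ≤ (2 * (‖x‖ * ‖y‖)) ^ 2 := by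
    have h5 : ‖‖y‖ • x + ‖x‖ • y‖ ≤ 2 * (‖x‖ * ‖y‖) := by
      calc ‖‖y‖ • x + ‖x‖ • y‖ ≤ ‖‖y‖ • x‖ + ‖‖x‖ • y‖ := norm_add_le _ _
      _ = 2 * (‖x‖ * ‖y‖) := by
        simp [norm_smul, abs_of_pos hx', abs_of_pos hy']; ring
    exact pow_le_pow_left₀ (norm_nonneg _) h5 2
  rw [e3] at hk
  nlinarith [mul_pos hx' hy', mul_le_mul_of_nonneg_left e4 hl]

private lemma quad_lower' (A : E →L[ℝ] E) (hsym : ∀ x y, ⟪A x, y⟫ = ⟪x, A y⟫)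
    (lmax : ℝ) (hl : 0 ≤ lmax)
    (hpos : ∀ x, 0 ≤ ⟪A x, x⟫) (hub : ∀ x, ⟪A x, x⟫ ≤ lmax * ‖x‖ ^ 2)
    (x y : E) : -(lmax * (‖x‖ * ‖y‖)) ≤ ⟪A x, y⟫ := by
  have := quad_upper' A hsym lmax hl hpos hub x (-y)
  simp only [inner_neg_right, norm_neg] at this
  linarith

private lemma norm_lb' (A : E →L[ℝ] E) (lmin : ℝ) (hl : 0 ≤ lmin)
    (hlb : ∀ x, lmin * ‖x‖ ^ 2 ≤ ⟪A x, x⟫) (x : E) :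
    lmin ^ 2 * ‖x‖ ^ 2 ≤ ‖A x‖ ^ 2 := by
  rcases eq_or_ne x 0 with rfl | hx
  · simp
  have hx' : 0 < ‖x‖ := norm_pos_iff.mpr hx
  have h1 := hlb x
  have h2 : ⟪A x, x⟫ ≤ ‖A x‖ * ‖x‖ := real_inner_le_norm _ _
  have h3 : lmin * ‖x‖ ≤ ‖A x‖ := by nlinarith
  nlinarith [norm_nonneg (A x)]

end aux

/-- for `0 < t ≤ λmin^2/(8 λmax C_H)` the block matrix `H_t` satisfies
`‖H_t z‖^2 ≥ (λmin^2/2) ‖z‖^2` for all `z`; in particular it is invertible and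
`‖H_t⁻¹‖ ≤ √2/λmin` (stated as `‖z‖^2 ≤ (√2/λmin)^2 ‖H_t z‖^2`). -/
theorem stmt1 {n1 n2 : ℕ}
    (H1 : EuclideanSpace ℝ (Fin n1) →L[ℝ] EuclideanSpace ℝ (Fin n1))
    (H2 : EuclideanSpace ℝ (Fin n2) →L[ℝ] EuclideanSpace ℝ (Fin n2))
    (M1 : EuclideanSpace ℝ (Fin n2) →L[ℝ] EuclideanSpace ℝ (Fin n1))
    (M2 : EuclideanSpace ℝ (Fin n1) →L[ℝ] EuclideanSpace ℝ (Fin n2))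
    (lmin lmax CH : ℝ) (hlmin : 0 < lmin) (hlle : lmin ≤ lmax) (hCH : 0 < CH)
    (hH1sym : ∀ x y, ⟪H1 x, y⟫ = ⟪x, H1 y⟫)
    (hH2sym : ∀ x y, ⟪H2 x, y⟫ = ⟪x, H2 y⟫)
    (hH1spec : ∀ x, lmin * ‖x‖ ^ 2 ≤ ⟪H1 x, x⟫ ∧ ⟪H1 x, x⟫ ≤ lmax * ‖x‖ ^ 2)
    (hH2spec : ∀ x, lmin * ‖x‖ ^ 2 ≤ ⟪H2 x, x⟫ ∧ ⟪H2 x, x⟫ ≤ lmax * ‖x‖ ^ 2)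
    (hM1 : ‖M1‖ ≤ CH) (hM2 : ‖M2‖ ≤ CH)
    (t : ℝ) (ht0 : 0 < t) (ht : t ≤ lmin ^ 2 / (8 * lmax * CH)) :
    (∀ (z1 : EuclideanSpace ℝ (Fin n1)) (z2 : EuclideanSpace ℝ (Fin n2)),
      (lmin ^ 2 / 2) * (‖z1‖ ^ 2 + ‖z2‖ ^ 2) ≤
        ‖H1 z1 + t • M1 z2‖ ^ 2 + ‖t • M2 z1 + H2 z2‖ ^ 2) ∧
    Function.Bijective
      (fun z : EuclideanSpace ℝ (Fin n1) × EuclideanSpace ℝ (Fin n2) =>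
        (H1 z.1 + t • M1 z.2, t • M2 z.1 + H2 z.2)) ∧
    (∀ (z1 : EuclideanSpace ℝ (Fin n1)) (z2 : EuclideanSpace ℝ (Fin n2)),
      ‖z1‖ ^ 2 + ‖z2‖ ^ 2 ≤
        (Real.sqrt 2 / lmin) ^ 2 *
          (‖H1 z1 + t • M1 z2‖ ^ 2 + ‖t • M2 z1 + H2 z2‖ ^ 2)) := by
  have hlmax : 0 < lmax := lt_of_lt_of_le hlmin hlle
  have hl0 : (0:ℝ) ≤ lmax := hlmax.le
  have hmin0 : (0:ℝ) ≤ lmin := hlmin.le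
  have h1pos : ∀ x, 0 ≤ ⟪H1 x, x⟫ := fun x =>
    le_trans (by positivity) (hH1spec x).1
  have h2pos : ∀ x, 0 ≤ ⟪H2 x, x⟫ := fun x =>
    le_trans (by positivity) (hH2spec x).1
  have htC : t * (lmax * CH) ≤ lmin ^ 2 / 8 := by
    rw [le_div_iff₀ (by positivity)] at ht
    nlinarith
  have main : ∀ (z1 : EuclideanSpace ℝ (Fin n1)) (z2 : EuclideanSpace ℝ (Fin n2)),
      (lmin ^ 2 / 2) * (‖z1‖ ^ 2 + ‖z2‖ ^ 2) ≤
        ‖H1 z1 + t • M1 z2‖ ^ 2 + ‖t • M2 z1 + H2 z2‖ ^ 2 := by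
    intro z1 z2
    set a := ‖z1‖ with ha
    set b := ‖z2‖ with hb
    have ha0 : 0 ≤ a := norm_nonneg _
    have hb0 : 0 ≤ b := norm_nonneg _
    have ex1 : ‖H1 z1 + t • M1 z2‖ ^ 2
        = ‖H1 z1‖ ^ 2 + 2 * ⟪H1 z1, t • M1 z2⟫ + ‖t • M1 z2‖ ^ 2 :=
      norm_add_sq_real _ _
    have ex2 : ‖t • M2 z1 + H2 z2‖ ^ 2
        = ‖t • M2 z1‖ ^ 2 + 2 * ⟪t • M2 z1, H2 z2⟫ + ‖H2 z2‖ ^ 2 :=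
      norm_add_sq_real _ _
    have n1lb : lmin ^ 2 * a ^ 2 ≤ ‖H1 z1‖ ^ 2 :=
      norm_lb' H1 lmin hmin0 (fun x => (hH1spec x).1) z1
    have n2lb : lmin ^ 2 * b ^ 2 ≤ ‖H2 z2‖ ^ 2 :=
      norm_lb' H2 lmin hmin0 (fun x => (hH2spec x).1) z2
    have hM1z : ‖M1 z2‖ ≤ CH * b := le_trans (M1.le_opNorm z2)
      (mul_le_mul_of_nonneg_right hM1 hb0)
    have hM2z : ‖M2 z1‖ ≤ CH * a := le_trans (M2.le_opNorm z1)
      (mul_le_mul_of_nonneg_right hM2 ha0)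
    have c1 : -(lmax * (a * ‖M1 z2‖)) ≤ ⟪H1 z1, M1 z2⟫ :=
      quad_lower' H1 hH1sym lmax hl0 h1pos (fun x => (hH1spec x).2) z1 (M1 z2)
    have c2 : -(lmax * (b * ‖M2 z1‖)) ≤ ⟪H2 z2, M2 z1⟫ :=
      quad_lower' H2 hH2sym lmax hl0 h2pos (fun x => (hH2spec x).2) z2 (M2 z1)
    have c1' : ⟪H1 z1, t • M1 z2⟫ = t * ⟪H1 z1, M1 z2⟫ := real_inner_smul_right _ _ _
    have c2' : ⟪t • M2 z1, H2 z2⟫ = t * ⟪H2 z2, M2 z1⟫ := by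
      rw [real_inner_smul_left, real_inner_comm]
    have cross1 : -(t * (lmax * (CH * (a * b)))) ≤ ⟪H1 z1, t • M1 z2⟫ := by
      rw [c1']
      have : -(lmax * (a * (CH * b))) ≤ ⟪H1 z1, M1 z2⟫ := by
        refine le_trans ?_ c1
        have := mul_le_mul_of_nonneg_left hM1z (mul_nonneg hl0 ha0)
        nlinarith
      nlinarith
    have cross2 : -(t * (lmax * (CH * (a * b)))) ≤ ⟪t • M2 z1, H2 z2⟫ := by
      rw [c2']
      have : -(lmax * (b * (CH * a))) ≤ ⟪H2 z2, M2 z1⟫ := by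
        refine le_trans ?_ c2
        have := mul_le_mul_of_nonneg_left hM2z (mul_nonneg hl0 hb0)
        nlinarith
      nlinarith
    have sq1 : 0 ≤ ‖t • M1 z2‖ ^ 2 := by positivity
    have sq2 : 0 ≤ ‖t • M2 z1‖ ^ 2 := by positivity
    have habl : t * (lmax * (CH * (a * b))) ≤ lmin ^ 2 / 8 * (a * b) := by
      have hab : 0 ≤ a * b := mul_nonneg ha0 hb0
      have := mul_le_mul_of_nonneg_right htC hab
      nlinarith
    have key : (lmin ^ 2 / 2) * (a ^ 2 + b ^ 2) ≤
        lmin ^ 2 * a ^ 2 + lmin ^ 2 * b ^ 2 - 4 * (lmin ^ 2 / 8 * (a * b)) := by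
      nlinarith [sq_nonneg (a - b), sq_nonneg lmin]
    linarith [ex1, ex2, n1lb, n2lb, cross1, cross2, sq1, sq2, habl, key]
  refine ⟨main, ?_, ?_⟩
  · -- bijectivity
    let L : (EuclideanSpace ℝ (Fin n1) × EuclideanSpace ℝ (Fin n2)) →ₗ[ℝ]
        (EuclideanSpace ℝ (Fin n1) × EuclideanSpace ℝ (Fin n2)) :=
      { toFun := fun z => (H1 z.1 + t • M1 z.2, t • M2 z.1 + H2 z.2)
        map_add' := by
          intro x y
          simp only [Prod.fst_add, Prod.snd_add, map_add, smul_add, Prod.mk_add_mk,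
            Prod.mk.injEq]
          constructor <;> abel
        map_smul' := by
          intro c x
          simp only [Prod.smul_fst, Prod.smul_snd, map_smul, RingHom.id_apply,
            Prod.smul_mk, smul_add, Prod.mk.injEq]
          constructor <;> rw [smul_comm] }
    have hinj : Function.Injective L := by
      rw [← LinearMap.ker_eq_bot, LinearMap.ker_eq_bot']
      intro z hz
      have h1 : H1 z.1 + t • M1 z.2 = 0 := congrArg Prod.fst hz
      have h2 : t • M2 z.1 + H2 z.2 = 0 := congrArg Prod.snd hz
      have := main z.1 z.2
      rw [h1, h2] at this
      norm_num at this
      have hz1 : ‖z.1‖ ^ 2 + ‖z.2‖ ^ 2 ≤ 0 := by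
        nlinarith [pow_pos hlmin 2, sq_nonneg ‖z.1‖, sq_nonneg ‖z.2‖]
      have e1 : z.1 = 0 := by
        have : ‖z.1‖ = 0 := by nlinarith [sq_nonneg ‖z.1‖, sq_nonneg ‖z.2‖, norm_nonneg z.1]
        simpa using this
      have e2 : z.2 = 0 := by
        have : ‖z.2‖ = 0 := by nlinarith [sq_nonneg ‖z.1‖, sq_nonneg ‖z.2‖, norm_nonneg z.2]
        simpa using this
      exact Prod.ext e1 e2
    have hbij : Function.Bijective L :=
      ⟨hinj, (LinearMap.injective_iff_surjective).mp hinj⟩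
    exact hbij
  · -- norm bound
    intro z1 z2
    have h := main z1 z2
    have h2 : (Real.sqrt 2 / lmin) ^ 2 = 2 / lmin ^ 2 := by
      rw [div_pow, Real.sq_sqrt (by norm_num : (2:ℝ) ≥ 0)]
    rw [h2]
    rw [div_mul_eq_mul_div, le_div_iff₀ (by positivity)]
    nlinarith
end

section
/- Let $\mathcal{H}_t$ be as in the previous setting (symmetric diagonal blocks $H_1, H_2$ with spectrum in $[\lambda_{min},\lambda_{max}]$, off-diagonal blocks $tM_1, tM_2$ with $\|M_i\| \le C_H$) and suppose $0 < t \le \frac{\lambda_{min}^2}{8 \lambda_{max} C_H}$. If $d = (d_1, d_2)$ solves $\mathcal{H}_t d = -g$ for $g = (g_1, g_2)$, then $\|d\| \le \frac{\sqrt{2}}{\lambda_{min}} (\|g_1\| + \|g_2\|)$. -/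
open scoped RealInnerProductSpace

set_option maxHeartbeats 1000000 in
/-- if `d = (d1,d2)` solves `H_t d = -g` with `0 < t ≤ λmin^2/(8 λmax C_H)`,
then `‖d‖ ≤ (√2/λmin)(‖g1‖ + ‖g2‖)`. -/
theorem stmt2 {n1 n2 : ℕ}
    (H1 : EuclideanSpace ℝ (Fin n1) →L[ℝ] EuclideanSpace ℝ (Fin n1))
    (H2 : EuclideanSpace ℝ (Fin n2) →L[ℝ] EuclideanSpace ℝ (Fin n2))
    (M1 : EuclideanSpace ℝ (Fin n2) →L[ℝ] EuclideanSpace ℝ (Fin n1))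
    (M2 : EuclideanSpace ℝ (Fin n1) →L[ℝ] EuclideanSpace ℝ (Fin n2))
    (lmin lmax CH : ℝ) (hlmin : 0 < lmin) (hlle : lmin ≤ lmax) (hCH : 0 < CH)
    (hH1sym : ∀ x y, ⟪H1 x, y⟫ = ⟪x, H1 y⟫)
    (hH2sym : ∀ x y, ⟪H2 x, y⟫ = ⟪x, H2 y⟫)
    (hH1spec : ∀ x, lmin * ‖x‖ ^ 2 ≤ ⟪H1 x, x⟫ ∧ ⟪H1 x, x⟫ ≤ lmax * ‖x‖ ^ 2)
    (hH2spec : ∀ x, lmin * ‖x‖ ^ 2 ≤ ⟪H2 x, x⟫ ∧ ⟪H2 x, x⟫ ≤ lmax * ‖x‖ ^ 2)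
    (hM1 : ‖M1‖ ≤ CH) (hM2 : ‖M2‖ ≤ CH)
    (t : ℝ) (ht0 : 0 < t) (ht : t ≤ lmin ^ 2 / (8 * lmax * CH))
    (g1 d1 : EuclideanSpace ℝ (Fin n1)) (g2 d2 : EuclideanSpace ℝ (Fin n2))
    (hsys1 : H1 d1 + t • M1 d2 = -g1)
    (hsys2 : t • M2 d1 + H2 d2 = -g2) :
    Real.sqrt (‖d1‖ ^ 2 + ‖d2‖ ^ 2) ≤ Real.sqrt 2 / lmin * (‖g1‖ + ‖g2‖) := by
  set a := ‖d1‖ with ha'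
  set b := ‖d2‖ with hb'
  have e1 : ⟪H1 d1, d1⟫ + t * ⟪M1 d2, d1⟫ = -⟪g1, d1⟫ := by
    have := congrArg (fun v => ⟪v, d1⟫) hsys1
    simpa [inner_add_left, inner_smul_left, inner_neg_left] using this
  have e2 : t * ⟪M2 d1, d2⟫ + ⟪H2 d2, d2⟫ = -⟪g2, d2⟫ := by
    have := congrArg (fun v => ⟪v, d2⟫) hsys2
    simpa [inner_add_left, inner_smul_left, inner_neg_left] using this
  have hg1 : |⟪g1, d1⟫| ≤ ‖g1‖ * a := abs_real_inner_le_norm g1 d1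
  have hg2 : |⟪g2, d2⟫| ≤ ‖g2‖ * b := abs_real_inner_le_norm g2 d2
  have hM1' : |⟪M1 d2, d1⟫| ≤ CH * b * a := by
    calc |⟪M1 d2, d1⟫| ≤ ‖M1 d2‖ * a := abs_real_inner_le_norm _ _
    _ ≤ CH * b * a := by
        have h := (M1.le_opNorm d2).trans (mul_le_mul_of_nonneg_right hM1 (norm_nonneg d2))
        exact mul_le_mul_of_nonneg_right h (norm_nonneg d1)
  have hM2' : |⟪M2 d1, d2⟫| ≤ CH * a * b := by
    calc |⟪M2 d1, d2⟫| ≤ ‖M2 d1‖ * b := abs_real_inner_le_norm _ _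
    _ ≤ CH * a * b := by
        have h := (M2.le_opNorm d1).trans (mul_le_mul_of_nonneg_right hM2 (norm_nonneg d1))
        exact mul_le_mul_of_nonneg_right h (norm_nonneg d2)
  have hs1 := (hH1spec d1).1
  have hs2 := (hH2spec d2).1
  have k1 : lmin * a ^ 2 ≤ ‖g1‖ * a + t * (CH * b * a) := by
    have h1 := abs_le.mp hg1
    have h2 := abs_le.mp hM1'
    nlinarith [h1.1, h1.2, h2.1, h2.2]
  have k2 : lmin * b ^ 2 ≤ ‖g2‖ * b + t * (CH * a * b) := by
    have h1 := abs_le.mp hg2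
    have h2 := abs_le.mp hM2'
    nlinarith [h1.1, h1.2, h2.1, h2.2]
  have hmax : 0 < lmax := lt_of_lt_of_le hlmin hlle
  have htCH : t * CH ≤ lmin / 8 := by
    have h8 : (0:ℝ) < 8 * lmax * CH := by positivity
    rw [le_div_iff₀ h8] at ht
    nlinarith [mul_pos hlmin hmax]
  set s := Real.sqrt (a ^ 2 + b ^ 2) with hsdef
  have hs_sq : s ^ 2 = a ^ 2 + b ^ 2 := Real.sq_sqrt (by positivity)
  have hs_nn : 0 ≤ s := Real.sqrt_nonneg _
  have hasq : a ≤ s := by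
    rw [hsdef]
    exact (Real.le_sqrt (norm_nonneg d1) (by positivity)).mpr (by nlinarith [sq_nonneg b])
  have hbsq : b ≤ s := by
    rw [hsdef]
    exact (Real.le_sqrt (norm_nonneg d2) (by positivity)).mpr (by nlinarith [sq_nonneg a])
  have hG1 : (0:ℝ) ≤ ‖g1‖ := norm_nonneg _
  have hG2 : (0:ℝ) ≤ ‖g2‖ := norm_nonneg _
  have ha_nn : (0:ℝ) ≤ a := norm_nonneg _
  have hb_nn : (0:ℝ) ≤ b := norm_nonneg _
  have hab : t * CH * (a * b) ≤ lmin / 8 * (a * b) :=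
    mul_le_mul_of_nonneg_right htCH (mul_nonneg ha_nn hb_nn)
  have key : 7/8 * lmin * s ^ 2 ≤ (‖g1‖ + ‖g2‖) * s := by
    nlinarith [sq_nonneg (a - b), mul_le_mul_of_nonneg_left hasq hG1,
      mul_le_mul_of_nonneg_left hbsq hG2, hab, hs_sq, k1, k2, mul_nonneg hlmin.le (mul_nonneg ha_nn hb_nn)]
  have hsqrt2 : (8:ℝ)/7 ≤ Real.sqrt 2 := by
    nlinarith [Real.sq_sqrt (show (0:ℝ) ≤ 2 by norm_num), Real.sqrt_nonneg 2]
  rcases eq_or_lt_of_le hs_nn with h0 | h0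
  · rw [← h0]; positivity
  · have h1 : 7/8 * lmin * s ≤ ‖g1‖ + ‖g2‖ := by
      have := mul_le_mul_of_nonneg_right key (le_of_lt (inv_pos.mpr h0))
      calc 7/8 * lmin * s = 7/8 * lmin * s ^ 2 * s⁻¹ := by field_simp
      _ ≤ (‖g1‖ + ‖g2‖) * s * s⁻¹ := this
      _ = ‖g1‖ + ‖g2‖ := by field_simp
    rw [div_mul_eq_mul_div, le_div_iff₀ hlmin]
    nlinarith
end

section
/- In the above setting, with $C_k := \frac{\sqrt{2}}{\lambda_{min}}(\|g_1\|+\|g_2\|)$ and $d = (d_1, d_2)$ the solution of $\mathcal{H}_t d = -g$, if additionally $t \le \frac{\|g_1\|}{2 C_H C_k}$, then $\frac{1}{2}\|g_1\| \le \|H_1 d_1\| \le \frac{3}{2}\|g_1\|$. -/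
open scoped RealInnerProductSpace

set_option maxHeartbeats 4000000

/-- with `C_k = (√2/λmin)(‖g1‖+‖g2‖)` and additionally
`t ≤ ‖g1‖/(2 C_H C_k)`, one has `½‖g1‖ ≤ ‖H1 d1‖ ≤ (3/2)‖g1‖`. -/
theorem stmt3 {n1 n2 : ℕ}
    (H1 : EuclideanSpace ℝ (Fin n1) →L[ℝ] EuclideanSpace ℝ (Fin n1))
    (H2 : EuclideanSpace ℝ (Fin n2) →L[ℝ] EuclideanSpace ℝ (Fin n2))
    (M1 : EuclideanSpace ℝ (Fin n2) →L[ℝ] EuclideanSpace ℝ (Fin n1))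
    (M2 : EuclideanSpace ℝ (Fin n1) →L[ℝ] EuclideanSpace ℝ (Fin n2))
    (lmin lmax CH : ℝ) (hlmin : 0 < lmin) (hlle : lmin ≤ lmax) (hCH : 0 < CH)
    (hH1sym : ∀ x y, ⟪H1 x, y⟫ = ⟪x, H1 y⟫)
    (hH2sym : ∀ x y, ⟪H2 x, y⟫ = ⟪x, H2 y⟫)
    (hH1spec : ∀ x, lmin * ‖x‖ ^ 2 ≤ ⟪H1 x, x⟫ ∧ ⟪H1 x, x⟫ ≤ lmax * ‖x‖ ^ 2)
    (hH2spec : ∀ x, lmin * ‖x‖ ^ 2 ≤ ⟪H2 x, x⟫ ∧ ⟪H2 x, x⟫ ≤ lmax * ‖x‖ ^ 2)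
    (hM1 : ‖M1‖ ≤ CH) (hM2 : ‖M2‖ ≤ CH)
    (g1 d1 : EuclideanSpace ℝ (Fin n1)) (g2 d2 : EuclideanSpace ℝ (Fin n2))
    (hg1 : g1 ≠ 0)
    (t : ℝ) (ht0 : 0 < t) (ht : t ≤ lmin ^ 2 / (8 * lmax * CH))
    (ht2 : t ≤ ‖g1‖ / (2 * CH * (Real.sqrt 2 / lmin * (‖g1‖ + ‖g2‖))))
    (hsys1 : H1 d1 + t • M1 d2 = -g1)
    (hsys2 : t • M2 d1 + H2 d2 = -g2) :
    (1 / 2) * ‖g1‖ ≤ ‖H1 d1‖ ∧ ‖H1 d1‖ ≤ (3 / 2) * ‖g1‖ := by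
  have hlmax : 0 < lmax := lt_of_lt_of_le hlmin hlle
  have hG1 : 0 < ‖g1‖ := norm_pos_iff.mpr hg1
  set a := ‖d1‖ with hadef
  set b := ‖d2‖ with hbdef
  have ha : 0 ≤ a := norm_nonneg _
  have hb : 0 ≤ b := norm_nonneg _
  set G := ‖g1‖ + ‖g2‖ with hGdef
  have hGpos : 0 < G := lt_of_lt_of_le hG1 (le_add_of_nonneg_right (norm_nonneg _))
  -- inner product identities
  have e1 : ⟪H1 d1, d1⟫ + t * ⟪M1 d2, d1⟫ = -⟪g1, d1⟫ := by
    have h : ⟪H1 d1 + t • M1 d2, d1⟫ = ⟪(-g1 : EuclideanSpace ℝ (Fin n1)), d1⟫ := by rw [hsys1]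
    rw [inner_add_left, real_inner_smul_left, inner_neg_left] at h; exact h
  have e2 : t * ⟪M2 d1, d2⟫ + ⟪H2 d2, d2⟫ = -⟪g2, d2⟫ := by
    have h : ⟪t • M2 d1 + H2 d2, d2⟫ = ⟪(-g2 : EuclideanSpace ℝ (Fin n2)), d2⟫ := by rw [hsys2]
    rw [inner_add_left, real_inner_smul_left, inner_neg_left] at h; exact h
  have bM1 : |⟪M1 d2, d1⟫| ≤ CH * b * a := by
    calc |⟪M1 d2, d1⟫| ≤ ‖M1 d2‖ * ‖d1‖ := abs_real_inner_le_norm _ _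
      _ ≤ (CH * b) * a := by
          gcongr
          calc ‖M1 d2‖ ≤ ‖M1‖ * ‖d2‖ := M1.le_opNorm d2
            _ ≤ CH * b := by gcongr
  have bM2 : |⟪M2 d1, d2⟫| ≤ CH * a * b := by
    calc |⟪M2 d1, d2⟫| ≤ ‖M2 d1‖ * ‖d2‖ := abs_real_inner_le_norm _ _
      _ ≤ (CH * a) * b := by
          gcongr
          calc ‖M2 d1‖ ≤ ‖M2‖ * ‖d1‖ := M2.le_opNorm d1
            _ ≤ CH * a := by gcongr
  have bg1 : |⟪g1, d1⟫| ≤ ‖g1‖ * a := abs_real_inner_le_norm _ _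
  have bg2 : |⟪g2, d2⟫| ≤ ‖g2‖ * b := abs_real_inner_le_norm _ _
  have h1 := (hH1spec d1).1
  have h2 := (hH2spec d2).1
  have key : lmin * (a ^ 2 + b ^ 2) ≤ ‖g1‖ * a + ‖g2‖ * b + 2 * (t * CH) * (a * b) := by
    have hm1 := (abs_le.mp bM1).1
    have hm2 := (abs_le.mp bM2).1
    have hg1' := (abs_le.mp bg1).1
    have hg2' := (abs_le.mp bg2).1
    nlinarith [mul_le_mul_of_nonneg_left (neg_le_of_neg_le hm1) ht0.le,
      mul_le_mul_of_nonneg_left (neg_le_of_neg_le hm2) ht0.le]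
  have htCH : t * CH ≤ lmin / 8 := by
    have h : t * CH ≤ lmin ^ 2 / (8 * lmax * CH) * CH := by gcongr
    have h2 : lmin ^ 2 / (8 * lmax * CH) * CH = lmin ^ 2 / (8 * lmax) := by
      field_simp
    rw [h2] at h
    calc t * CH ≤ lmin ^ 2 / (8 * lmax) := h
      _ ≤ lmin / 8 := by
          rw [div_le_div_iff₀ (by positivity) (by norm_num : (0:ℝ) < 8)]
          nlinarith
  have key2 : 7 / 8 * lmin * (a ^ 2 + b ^ 2) ≤ ‖g1‖ * a + ‖g2‖ * b := by
    nlinarith [sq_nonneg (a - b), mul_pos ht0 hCH]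
  set s := Real.sqrt (a ^ 2 + b ^ 2) with hsdef
  have hs : 0 ≤ s := Real.sqrt_nonneg _
  have hs2 : s ^ 2 = a ^ 2 + b ^ 2 := Real.sq_sqrt (by positivity)
  have has : a ≤ s := by
    nlinarith [sq_nonneg b]
  have hbs : b ≤ s := by
    nlinarith [sq_nonneg a]
  have key3 : 7 / 8 * lmin * s ^ 2 ≤ G * s := by
    calc 7 / 8 * lmin * s ^ 2 ≤ ‖g1‖ * a + ‖g2‖ * b := by rw [hs2]; exact key2
      _ ≤ ‖g1‖ * s + ‖g2‖ * s := by gcongr <;> positivity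
      _ = G * s := by ring
  have hslin : lmin * s ≤ 8 / 7 * G := by
    nlinarith [mul_pos hGpos (hlmin)]
  have hsqrt2 : 8 / 7 ≤ Real.sqrt 2 := by
    nlinarith [Real.sq_sqrt (by norm_num : (2:ℝ) ≥ 0), Real.sqrt_nonneg 2]
  have hCk : 0 < Real.sqrt 2 / lmin * G := by positivity
  have hbCk : b ≤ Real.sqrt 2 / lmin * G := by
    rw [div_mul_eq_mul_div, le_div_iff₀ hlmin]
    calc b * lmin ≤ s * lmin := by gcongr
      _ = lmin * s := by ring
      _ ≤ 8 / 7 * G := hslin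
      _ ≤ Real.sqrt 2 * G := by gcongr
  have htfin : t * (CH * b) ≤ ‖g1‖ / 2 := by
    have h2pos : 0 < 2 * CH * (Real.sqrt 2 / lmin * G) := by positivity
    have := (le_div_iff₀ h2pos).mp ht2
    nlinarith [mul_le_mul_of_nonneg_left hbCk (mul_pos ht0 hCH).le]
  -- main norm estimate
  have hdiff : ‖H1 d1 + g1‖ ≤ ‖g1‖ / 2 := by
    have h0 : H1 d1 + t • M1 d2 + g1 = 0 := by rw [hsys1]; simp
    have hEq : H1 d1 + g1 = -(t • M1 d2) := by
      rw [eq_neg_iff_add_eq_zero]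
      calc H1 d1 + g1 + t • M1 d2 = H1 d1 + t • M1 d2 + g1 := by abel
        _ = 0 := h0
    rw [hEq, norm_neg, norm_smul, Real.norm_eq_abs, abs_of_pos ht0]
    calc t * ‖M1 d2‖ ≤ t * (CH * b) := by
          gcongr
          calc ‖M1 d2‖ ≤ ‖M1‖ * ‖d2‖ := M1.le_opNorm d2
            _ ≤ CH * b := by gcongr
      _ ≤ ‖g1‖ / 2 := htfin
  constructor
  · have h : ‖g1‖ ≤ ‖H1 d1 + g1‖ + ‖H1 d1‖ := by
      calc ‖g1‖ = ‖(H1 d1 + g1) - H1 d1‖ := by rw [add_sub_cancel_left]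
        _ ≤ ‖H1 d1 + g1‖ + ‖H1 d1‖ := norm_sub_le _ _
    linarith
  · have h : ‖H1 d1‖ ≤ ‖H1 d1 + g1‖ + ‖g1‖ := by
      calc ‖H1 d1‖ = ‖(H1 d1 + g1) - g1‖ := by rw [add_sub_cancel_right]
        _ ≤ ‖H1 d1 + g1‖ + ‖g1‖ := norm_sub_le _ _
    linarith
end

section
/- Let $f: \mathbb{R}^{n_1} \times \mathbb{R}^{n_2} \to \mathbb{R}$ be twice continuously differentiable, and suppose $\nabla_{x_1}f(x_1, x_2 + t d_2) = g + t B d_2 + r$ where $g = \nabla_{x_1}f(x_1,x_2)$, $B = \nabla^2_{x_1 x_2}f(x_1,x_2)$, and $\|r\| \le C_R t^2 \|d_2\|^2$. Suppose $(d_1, d_2)$ solves $H_1 d_1 + t B d_2 = -g$ with $H_1$ symmetric positive definite with eigenvalues in $[\lambda_{min}, \lambda_{max}]$, and assume $\|d_2\| \le C_k$ and $t \le \sqrt{\frac{\lambda_{min}\|d_1\|}{2 C_R C_k^2}}$. Then $d_1^T \nabla_{x_1} f(x_1, x_2 + t d_2) \le -\frac{\lambda_{min}}{2}\|d_1\|^2$.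 -/
open scoped RealInnerProductSpace

/-- slope estimate. With `∇₁f(x1, x2+td2) = g + tBd2 + r`, `‖r‖ ≤ C_R t²‖d2‖²`,
`H1 d1 + tBd2 = -g`, `H1` symmetric with spectrum in `[λmin,λmax]`, `‖d2‖ ≤ C_k` and
`t ≤ √(λmin‖d1‖/(2C_R C_k²))`, one has `d1ᵀ∇₁f(x1,x2+td2) ≤ -(λmin/2)‖d1‖²`. -/
theorem stmt6 {n1 n2 : ℕ}
    (f : EuclideanSpace ℝ (Fin n1) × EuclideanSpace ℝ (Fin n2) → ℝ)
    (G : EuclideanSpace ℝ (Fin n1) × EuclideanSpace ℝ (Fin n2) → EuclideanSpace ℝ (Fin n1))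
    (hgrad : ∀ x2 x1, HasGradientAt (fun y => f (y, x2)) (G (x1, x2)) x1)
    (B : EuclideanSpace ℝ (Fin n2) →L[ℝ] EuclideanSpace ℝ (Fin n1))
    (H1 : EuclideanSpace ℝ (Fin n1) →L[ℝ] EuclideanSpace ℝ (Fin n1))
    (lmin lmax CR Ck : ℝ) (hlmin : 0 < lmin) (hlle : lmin ≤ lmax)
    (hCR : 0 < CR) (hCk : 0 < Ck)
    (hH1sym : ∀ x y, ⟪H1 x, y⟫ = ⟪x, H1 y⟫)
    (hH1spec : ∀ x, lmin * ‖x‖ ^ 2 ≤ ⟪H1 x, x⟫ ∧ ⟪H1 x, x⟫ ≤ lmax * ‖x‖ ^ 2)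
    (x1 : EuclideanSpace ℝ (Fin n1)) (x2 : EuclideanSpace ℝ (Fin n2))
    (d1 r : EuclideanSpace ℝ (Fin n1)) (d2 : EuclideanSpace ℝ (Fin n2))
    (t : ℝ) (ht0 : 0 < t)
    (htaylor : G (x1, x2 + t • d2) = G (x1, x2) + t • B d2 + r)
    (hr : ‖r‖ ≤ CR * t ^ 2 * ‖d2‖ ^ 2)
    (hsys : H1 d1 + t • B d2 = -G (x1, x2))
    (hd2 : ‖d2‖ ≤ Ck)
    (ht : t ≤ Real.sqrt (lmin * ‖d1‖ / (2 * CR * Ck ^ 2))) :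
    ⟪d1, G (x1, x2 + t • d2)⟫ ≤ -(lmin / 2) * ‖d1‖ ^ 2 := by
  have hG : G (x1, x2 + t • d2) = -H1 d1 + r := by
    rw [htaylor]
    have : G (x1, x2) + t • B d2 = -H1 d1 := by
      have := hsys
      abel_nf at this ⊢
      linear_combination (norm := abel_nf) this
    rw [add_assoc] at *
    rw [show G (x1, x2) + (t • B d2 + r) = (G (x1, x2) + t • B d2) + r by abel, this]
  have ht2 : t ^ 2 ≤ lmin * ‖d1‖ / (2 * CR * Ck ^ 2) := by
    have h0 : 0 ≤ lmin * ‖d1‖ / (2 * CR * Ck ^ 2) := by positivity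
    calc t ^ 2 ≤ Real.sqrt (lmin * ‖d1‖ / (2 * CR * Ck ^ 2)) ^ 2 := by
          apply pow_le_pow_left₀ ht0.le ht
      _ = _ := Real.sq_sqrt h0
  have hrt : ‖r‖ ≤ CR * t ^ 2 * Ck ^ 2 := by
    refine hr.trans ?_
    gcongr
  have hrt2 : ‖r‖ ≤ lmin * ‖d1‖ / 2 := by
    refine hrt.trans ?_
    calc CR * t ^ 2 * Ck ^ 2 ≤ CR * (lmin * ‖d1‖ / (2 * CR * Ck ^ 2)) * Ck ^ 2 := by gcongr
      _ = lmin * ‖d1‖ / 2 := by field_simp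
  rw [hG, inner_add_right, inner_neg_right]
  have hspec := (hH1spec d1).1
  have hinner : ⟪d1, H1 d1⟫ = ⟪H1 d1, d1⟫ := real_inner_comm _ _
  have hcs : ⟪d1, r⟫ ≤ ‖d1‖ * ‖r‖ := real_inner_le_norm d1 r
  have : ‖d1‖ * ‖r‖ ≤ ‖d1‖ * (lmin * ‖d1‖ / 2) :=
    mul_le_mul_of_nonneg_left hrt2 (norm_nonneg _)
  nlinarith [norm_nonneg d1]
end
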